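/- Let AD be an action description of AL_IR, σ₀ a state, a₀ an action, q₀ ⊆ 𝓕 a qualifier, and A an answer set of the ASP program Φ¹(σ₀,a₀,q₀). Then ⟨σ₀,a₀,σ₁⟩ is a transition of the transition diagram τ(AD), where σ₁ = {l | χ(l,1) ∈ A} ∪ {u(f) | u(f,1) ∈ A}; in particular, σ₁ is a complete and consistent set of extended literals, a₀ is executable in σ₀, and σ₁ = Cn_Z(W ∪ (σ₁ ∩ σ₀)) for some W ∈ 𝔼(a₀,σ₀). -/

import Mathlib

/- Formalization of the action language AL_IR, its transition-diagram semantics,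
   forcing/completion/conservative expansion, the ASP translation, and the
   FindMatch algorithm, following Balduccini & LeBlanc,
   "Action-Centered Information Retrieval". -/

namespace ACIR

/-- Extended literals over a set `F` of fluents: a fluent `f`, its negation `¬f`,
or the expression `u(f)` ("unknown"). -/
inductive ELit (F : Type) : Type
  | pos : F → ELit F
  | neg : F → ELit F
  | und : F → ELit F

/-- Fluent literals: a fluent or its negation. -/
inductive FLit (F : Type) : Type
  | pos : F → FLit F
  | neg : F → FLit F

/-- The extended literal corresponding to a fluent literal. -/
def FLit.toE {F : Type} : FLit F → ELit F
  | .pos f => .pos f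
  | .neg f => .neg f

/-- An extended literal is a (proper) fluent literal, i.e. not of the form `u(f)`. -/
def ELit.isLit {F : Type} : ELit F → Prop
  | .pos _ => True
  | .neg _ => True
  | .und _ => False

/-- The fluent occurring in an extended literal. -/
def ELit.fluent {F : Type} : ELit F → F
  | .pos f => f
  | .neg f => f
  | .und f => f

/-- A set of extended literals consists solely of fluent literals. -/
def IsLitSet {F : Type} (S : Set (ELit F)) : Prop := ∀ l ∈ S, l.isLit

/-- A set of extended literals is consistent: for every fluent `f`, at most one of
`f`, `¬f`, `u(f)` belongs to it. -/
def ConsistentE {F : Type} (S : Set (ELit F)) : Prop :=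
  ∀ f : F, ¬ (ELit.pos f ∈ S ∧ ELit.neg f ∈ S) ∧
           ¬ (ELit.pos f ∈ S ∧ ELit.und f ∈ S) ∧
           ¬ (ELit.neg f ∈ S ∧ ELit.und f ∈ S)

/-- A set of extended literals is complete: for every fluent `f`, at least one of
`f`, `¬f`, `u(f)` belongs to it. -/
def CompleteE {F : Type} (S : Set (ELit F)) : Prop :=
  ∀ f : F, ELit.pos f ∈ S ∨ ELit.neg f ∈ S ∨ ELit.und f ∈ S

/-- A state constraint `l₀ if l₁,…,lₙ` (head and body are fluent literals). -/
structure StateConstraint (F : Type) : Type where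
  head : FLit F
  body : List (FLit F)

/-- A dynamic law `e causes λ if l₁,…,lₙ` (the consequence is an extended literal). -/
structure DynamicLaw (F E : Type) : Type where
  act : E
  eff : ELit F
  cond : List (FLit F)

/-- An executability condition `e impossible_if l₁,…,lₙ`. -/
structure ExecCond (F E : Type) : Type where
  act : E
  cond : List (FLit F)

/-- An action description of AL_IR. -/
structure ActionDesc (F E : Type) : Type where
  dyn : Set (DynamicLaw F E)
  sc : Set (StateConstraint F)
  exec : Set (ExecCond F E)

/-- `S` is closed under the state constraint `c`: either the body is not contained
in `S` or the head belongs to `S`. -/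
def ClosedUnderSC {F : Type} (c : StateConstraint F) (S : Set (ELit F)) : Prop :=
  (∀ l ∈ c.body, l.toE ∈ S) → c.head.toE ∈ S

/-- `Cn Z S`: the smallest set of extended literals containing `S` and closed
under every state constraint in `Z`. -/
def Cn {F : Type} (Z : Set (StateConstraint F)) (S : Set (ELit F)) : Set (ELit F) :=
  ⋂₀ {T | S ⊆ T ∧ ∀ c ∈ Z, ClosedUnderSC c T}

/-- A state of an action description: a complete and consistent set of extended
literals closed under the state constraints. -/
def IsState {F E : Type} (AD : ActionDesc F E) (σ : Set (ELit F)) : Prop :=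
  CompleteE σ ∧ ConsistentE σ ∧ ∀ c ∈ AD.sc, ClosedUnderSC c σ

/-- The direct effects `E(a,σ)` of action `a` (a set of elementary actions) in `σ`. -/
def directEff {F E : Type} (AD : ActionDesc F E) (a : Set E) (σ : Set (ELit F)) :
    Set (ELit F) :=
  {lam | ∃ d ∈ AD.dyn, d.act ∈ a ∧ (∀ l ∈ d.cond, l.toE ∈ σ) ∧ lam = d.eff}

/-- The expansion `𝔼(a,σ)`: the join of the fluent-literal part of `E(a,σ)` with
`{f,¬f,u(f)}` for every fluent `f` with `u(f) ∈ E(a,σ)`. -/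
def expansion {F E : Type} (AD : ActionDesc F E) (a : Set E) (σ : Set (ELit F)) :
    Set (Set (ELit F)) :=
  {W | ∃ c : F → ELit F,
    (∀ f : F, ELit.und f ∈ directEff AD a σ →
      (c f = ELit.pos f ∨ c f = ELit.neg f ∨ c f = ELit.und f)) ∧
    W = {l ∈ directEff AD a σ | l.isLit} ∪
        {l | ∃ f : F, ELit.und f ∈ directEff AD a σ ∧ l = c f}}

/-- Action `a` is executable in `σ`: no executability condition applies. -/
def Executable {F E : Type} (AD : ActionDesc F E) (a : Set E) (σ : Set (ELit F)) : Prop :=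
  ¬ ∃ ec ∈ AD.exec, ec.act ∈ a ∧ ∀ l ∈ ec.cond, l.toE ∈ σ

/-- `⟨σ,a,σ'⟩` is a transition of the transition diagram `τ(AD)`:
`σ`,`σ'` are states, `a` is executable in `σ`, and the expanded
successor-state equation holds for some `W ∈ 𝔼(a,σ)`. -/
def IsTransition {F E : Type} (AD : ActionDesc F E)
    (σ : Set (ELit F)) (a : Set E) (σ' : Set (ELit F)) : Prop :=
  IsState AD σ ∧ IsState AD σ' ∧ Executable AD a σ ∧
  ∃ W ∈ expansion AD a σ, σ' = Cn AD.sc (W ∪ (σ ∩ σ'))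

/-- A sequence `⟨σ₀,a₀,σ₁,…,a_{n-1},σ_n⟩`. -/
structure Path (F E : Type) (n : ℕ) : Type where
  states : Fin (n + 1) → Set (ELit F)
  acts : Fin n → Set E

/-- `π` is a path of `τ(AD)`: every triple is a transition. -/
def IsPath {F E : Type} {n : ℕ} (AD : ActionDesc F E) (π : Path F E n) : Prop :=
  ∀ i : Fin n, IsTransition AD (π.states i.castSucc) (π.acts i) (π.states i.succ)

/-- The branching-set of a transition. -/
def branchSet {F E : Type} (AD : ActionDesc F E)
    (σ : Set (ELit F)) (a : Set E) (σ' : Set (ELit F)) : Set F :=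
  {f | ELit.und f ∈ directEff AD a σ ∧ ELit.und f ∉ σ'}

/-- A qualified action sequence `⟨a₀/q₀,…,a_{n-1}/q_{n-1}⟩`. -/
structure QSeq (F E : Type) (n : ℕ) : Type where
  acts : Fin n → Set E
  quals : Fin n → Set F

/-- The branching degree `Δ(s) = |q₀| + ⋯ + |q_{n-1}|`. -/
noncomputable def QSeq.degree {F E : Type} {n : ℕ} (s : QSeq F E n) : ℕ :=
  ∑ i : Fin n, (s.quals i).ncard

/-- `s` extends the action sequence `ℵ` (any choice of qualifiers). -/
def QSeq.Extends {F E : Type} {n : ℕ} (s : QSeq F E n) (ℵ : Fin n → Set E) : Prop :=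
  s.acts = ℵ

/-- `ℵ^×`: the extension of `ℵ` in which every qualifier is the whole set `𝓕`. -/
def qall {F E : Type} {n : ℕ} (ℵ : Fin n → Set E) : QSeq F E n :=
  ⟨ℵ, fun _ => Set.univ⟩

/-- `ℵ^?`: the extension of `ℵ` in which every qualifier is empty. -/
def qnone {F E : Type} {n : ℕ} (ℵ : Fin n → Set E) : QSeq F E n :=
  ⟨ℵ, fun _ => ∅⟩

/-- The empty qualified action sequence `⟨⟩`. -/
def emptyQ {F E : Type} : QSeq F E 0 := ⟨fun i => i.elim0, fun i => i.elim0⟩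

/-- `π` is a model of `[Σ, s]`: `π` is a path of `τ(AD)` starting at some state of
`Σ`, executing the actions of `s`, and the branching-set of each transition equals
the corresponding qualifier. -/
def IsModel {F E : Type} {n : ℕ} (AD : ActionDesc F E) (π : Path F E n)
    (Sig : Set (Set (ELit F))) (s : QSeq F E n) : Prop :=
  IsPath AD π ∧ π.states 0 ∈ Sig ∧ π.acts = s.acts ∧
  ∀ i : Fin n, branchSet AD (π.states i.castSucc) (π.acts i) (π.states i.succ) = s.quals i

/-- `π` entails the fluent literal `l`: `l` belongs to the final state of `π`. -/
def Entails {F E : Type} {n : ℕ} (π : Path F E n) (l : FLit F) : Prop :=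
  l.toE ∈ π.states (Fin.last n)

/-- `π ⊨ ±q`: `π` entails `q` or `π` entails `¬q`. -/
def EntailsPM {F E : Type} {n : ℕ} (π : Path F E n) (q : F) : Prop :=
  Entails π (FLit.pos q) ∨ Entails π (FLit.neg q)

/-! ### Forcing, completion, conservative expansion -/

/-- The possible "added" sets in the forcing `I[f]` of a fluent `f` in `I`,
relative to the set `D` of default fluents. -/
def forceChoices {F : Type} (D : Set F) (I : Set (ELit F)) (f : F) :
    Set (Set (ELit F)) :=
  {X | (f ∈ D ∧ ELit.neg f ∉ I ∧ ELit.und f ∉ I ∧ X = {ELit.pos f})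
     ∨ (f ∉ D ∧ ELit.pos f ∉ I ∧ ELit.neg f ∉ I ∧ ELit.und f ∉ I ∧
          (X = {ELit.pos f} ∨ X = {ELit.neg f}))
     ∨ (¬ ((f ∈ D ∧ ELit.neg f ∉ I ∧ ELit.und f ∉ I) ∨
           (f ∉ D ∧ ELit.pos f ∉ I ∧ ELit.neg f ∉ I ∧ ELit.und f ∉ I)) ∧ X = ∅)}

/-- The forcing `I[f]` of a single fluent `f` in `I`. -/
def forceOne {F : Type} (D : Set F) (I : Set (ELit F)) (f : F) :
    Set (Set (ELit F)) :=
  {J | ∃ X ∈ forceChoices D I f, J = I ∪ X}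

/-- The forcing `I[Fs]` of a set `Fs` of fluents in `I`: each fluent of `Fs` is
forced independently (the recursive definition of the paper). -/
def forceSet {F : Type} (D : Set F) (I : Set (ELit F)) (Fs : Set F) :
    Set (Set (ELit F)) :=
  {J | ∃ c : F → Set (ELit F),
        (∀ f ∈ Fs, c f ∈ forceChoices D I f) ∧ J = I ∪ ⋃ f ∈ Fs, c f}

/-- `Cn_Z(I')` where `I'` expands `I` by `¬f` for every default fluent `f ∉ I`. -/
def gammaBase {F E : Type} (D : Set F) (AD : ActionDesc F E) (I : Set (ELit F)) :
    Set (ELit F) :=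
  Cn AD.sc (I ∪ {l | ∃ f ∈ D, ELit.pos f ∉ I ∧ l = ELit.neg f})

/-- The completion `γ(I)` exists iff `Cn_Z(I')` is consistent. -/
def GammaExists {F E : Type} (D : Set F) (AD : ActionDesc F E) (I : Set (ELit F)) :
    Prop :=
  ConsistentE (gammaBase D AD I)

/-- Fluent `f` occurs in some literal of `S`. -/
def fOccurs {F : Type} (f : F) (S : Set (ELit F)) : Prop := ∃ l ∈ S, l.fluent = f

/-- The completion `γ(I)`: `Cn_Z(I')` together with `u(f)` for every fluent `f`
occurring in no literal of `Cn_Z(I')` (meaningful when `GammaExists` holds). -/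
def gamma {F E : Type} (D : Set F) (AD : ActionDesc F E) (I : Set (ELit F)) :
    Set (ELit F) :=
  gammaBase D AD I ∪ {l | ∃ f : F, ¬ fOccurs f (gammaBase D AD I) ∧ l = ELit.und f}

/-- The completion `γ(I,Fs)` of `I` w.r.t. a set `Fs` of fluents:
`{γ(I') | I' ∈ I[Fs], γ(I') exists}`. Its degree is `|Fs|`. -/
def gammaSet {F E : Type} (D : Set F) (AD : ActionDesc F E)
    (I : Set (ELit F)) (Fs : Set F) : Set (Set (ELit F)) :=
  {J | ∃ I' ∈ forceSet D I Fs, GammaExists D AD I' ∧ J = gamma D AD I'}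

/-- The family of sets `I' ∈ I[𝓕∖𝓓]` such that `γ(I')` exists and
`[γ(I'), ℵ^×]` has a model. -/
def epsFamily {F E : Type} (D : Set F) (AD : ActionDesc F E)
    (I : Set (ELit F)) {n : ℕ} (ℵ : Fin n → Set E) : Set (Set (ELit F)) :=
  {I' | I' ∈ forceSet D I (Set.univ \ D) ∧ GammaExists D AD I' ∧
        ∃ π : Path F E n, IsModel AD π {gamma D AD I'} (qall ℵ)}

/-- The conservative expansion `ε(I,ℵ)` exists iff the family is nonempty. -/
def EpsExists {F E : Type} (D : Set F) (AD : ActionDesc F E)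
    (I : Set (ELit F)) {n : ℕ} (ℵ : Fin n → Set E) : Prop :=
  (epsFamily D AD I ℵ).Nonempty

/-- The conservative expansion `ε(I,ℵ)`: the intersection of all members of the
family (meaningful when `EpsExists` holds). -/
def eps {F E : Type} (D : Set F) (AD : ActionDesc F E)
    (I : Set (ELit F)) {n : ℕ} (ℵ : Fin n → Set E) : Set (ELit F) :=
  ⋂₀ epsFamily D AD I ℵ

/-! ### Matching and semantic score -/

/-- `Fs` and `s` witness that the source `⟨Ψ,𝓓,AD,I,ℵ⟩` is a match for query `q`:
conditions (c1) and (c2) of the paper. -/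
def MatchWitness {F E : Type} (D : Set F) (AD : ActionDesc F E)
    {n : ℕ} (I : Set (ELit F)) (ℵ : Fin n → Set E) (q : F)
    (Fs : Set F) (s : QSeq F E n) : Prop :=
  s.Extends ℵ ∧
  ∃ π : Path F E n,
    IsModel AD π (gammaSet D AD (eps D AD I ℵ) Fs) s ∧ EntailsPM π q ∧
    ∀ π' : Path F E 0,
      IsModel AD π' (gammaSet D AD (π.states 0 \ eps D AD I ℵ) ∅) emptyQ →
      (¬ EntailsPM π' q) ∨
      (Entails π' (FLit.neg q) ∧ Entails π (FLit.pos q)) ∨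
      (Entails π' (FLit.pos q) ∧ Entails π (FLit.neg q))

/-- The source `⟨Ψ,𝓓,AD,I,ℵ⟩` is a match for the query `q`. -/
def IsMatch {F E : Type} (D : Set F) (AD : ActionDesc F E)
    {n : ℕ} (I : Set (ELit F)) (ℵ : Fin n → Set E) (q : F) : Prop :=
  ∃ (Fs : Set F) (s : QSeq F E n), MatchWitness D AD I ℵ q Fs s

/-- The semantic score of the source w.r.t. `q`: the smallest value of
`Δ(γ(ε(I,ℵ),F)) + Δ(s) = |F| + Δ(s)` over all witnesses; `∞` if no match. -/
noncomputable def semScore {F E : Type} (D : Set F) (AD : ActionDesc F E)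
    {n : ℕ} (I : Set (ELit F)) (ℵ : Fin n → Set E) (q : F) : ℕ∞ :=
  sInf {v : ℕ∞ | ∃ (Fs : Set F) (s : QSeq F E n),
    MatchWitness D AD I ℵ q Fs s ∧ v = ((Fs.ncard + s.degree : ℕ) : ℕ∞)}

/-! ### Answer Set Programming -/

/-- ASP literals over a set `A` of ground atoms: an atom or its (classical) negation. -/
inductive ALit (A : Type) : Type
  | pos : A → ALit A
  | neg : A → ALit A

/-- The atom of an ASP literal. -/
def ALit.atom {A : Type} : ALit A → A
  | .pos a => a
  | .neg a => a

/-- An ASP rule `h₁ ∨ ⋯ ∨ h_k ← l₁,…,l_m, not l_{m+1},…, not l_n`. -/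
structure Rule (A : Type) : Type where
  head : List (ALit A)
  bodyP : List (ALit A)
  bodyN : List (ALit A)

/-- A fact. -/
def fact {A : Type} (l : ALit A) : Rule A := ⟨[l], [], []⟩

/-- A consistent set of ASP literals. -/
def AConsistent {A : Type} (S : Set (ALit A)) : Prop :=
  ∀ a : A, ¬ (ALit.pos a ∈ S ∧ ALit.neg a ∈ S)

/-- `S` is closed under the rule `r`. -/
def ClosedRule {A : Type} (r : Rule A) (S : Set (ALit A)) : Prop :=
  ((∀ l ∈ r.bodyP, l ∈ S) ∧ (∀ l ∈ r.bodyN, l ∉ S)) → ∃ h ∈ r.head, h ∈ S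

/-- The reduct `Π^S`. -/
def Reduct {A : Type} (P : Set (Rule A)) (S : Set (ALit A)) : Set (Rule A) :=
  {r' | ∃ r ∈ P, (∀ l ∈ r.bodyN, l ∉ S) ∧ r' = ⟨r.head, r.bodyP, []⟩}

/-- `S` is an answer set of a `not`-free program: a minimal consistent set closed
under all rules. -/
def IsAnswerSetNF {A : Type} (P : Set (Rule A)) (S : Set (ALit A)) : Prop :=
  AConsistent S ∧ (∀ r ∈ P, ClosedRule r S) ∧
  ∀ T : Set (ALit A), AConsistent T → (∀ r ∈ P, ClosedRule r T) → T ⊆ S → T = S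

/-- `S` is an answer set of `P`: `S` is an answer set of the reduct `P^S`. -/
def IsAnswerSet {A : Type} (P : Set (Rule A)) (S : Set (ALit A)) : Prop :=
  IsAnswerSetNF (Reduct P S) S

/-! ### The ASP translation of AL_IR -/

/-- Ground atoms of the translation. -/
inductive PAtom (F E : Type) : Type
  | holds : F → ℕ → PAtom F E
  | u : F → ℕ → PAtom F E
  | occurs : E → ℕ → PAtom F E
  | split : F → ℕ → PAtom F E
  | init : F → PAtom F E
  | forced : F → PAtom F E
  | dflt : F → PAtom F E

/-- `χ(l,t)`: `holds(f,t)` if `l = f`, `¬holds(f,t)` if `l = ¬f`. -/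
def chi {F E : Type} : FLit F → ℕ → ALit (PAtom F E)
  | .pos f, t => .pos (.holds f t)
  | .neg f, t => .neg (.holds f t)

/-- The rules translating the laws of `AD` (for `n` time steps), together with the
consistency constraints and the inertia axioms. -/
def CoreProg {F E : Type} (AD : ActionDesc F E) (n : ℕ) : Set (Rule (PAtom F E)) :=
  -- dynamic laws with a fluent-literal consequence
  {r | ∃ d ∈ AD.dyn, ∃ t : ℕ, t < n ∧ ∃ l : FLit F, d.eff = l.toE ∧
      r = ⟨[chi l (t+1)],
           .pos (.occurs d.act t) :: d.cond.map (fun b => chi b t), []⟩} ∪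
  -- dynamic laws with consequence u(f): non-split rule
  {r | ∃ d ∈ AD.dyn, ∃ t : ℕ, t < n ∧ ∃ f : F, d.eff = ELit.und f ∧
      r = ⟨[.pos (.u f (t+1))],
           .pos (.occurs d.act t) :: d.cond.map (fun b => chi b t),
           [.pos (.split f t)]⟩} ∪
  -- dynamic laws with consequence u(f): split rule
  {r | ∃ d ∈ AD.dyn, ∃ t : ℕ, t < n ∧ ∃ f : F, d.eff = ELit.und f ∧
      r = ⟨[chi (FLit.pos f) (t+1), chi (FLit.neg f) (t+1)],
           .pos (.occurs d.act t) :: .pos (.split f t) ::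
             d.cond.map (fun b => chi b t), []⟩} ∪
  -- state constraints
  {r | ∃ c ∈ AD.sc, ∃ t : ℕ, t ≤ n ∧
      r = ⟨[chi c.head t], c.body.map (fun b => chi b t), []⟩} ∪
  -- executability conditions
  {r | ∃ ec ∈ AD.exec, ∃ t : ℕ, t < n ∧
      r = ⟨[], .pos (.occurs ec.act t) :: ec.cond.map (fun b => chi b t), []⟩} ∪
  -- consistency constraints
  {r | ∃ f : F, ∃ t : ℕ, t ≤ n ∧
      r = ⟨[], [chi (FLit.pos f) t, .pos (.u f t)], []⟩} ∪
  {r | ∃ f : F, ∃ t : ℕ, t ≤ n ∧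
      r = ⟨[], [chi (FLit.neg f) t, .pos (.u f t)], []⟩} ∪
  -- inertia axioms
  {r | ∃ f : F, ∃ t : ℕ, t < n ∧
      r = ⟨[chi (FLit.pos f) (t+1)], [chi (FLit.pos f) t],
           [chi (FLit.neg f) (t+1), .pos (.u f (t+1))]⟩} ∪
  {r | ∃ f : F, ∃ t : ℕ, t < n ∧
      r = ⟨[chi (FLit.neg f) (t+1)], [chi (FLit.neg f) t],
           [chi (FLit.pos f) (t+1), .pos (.u f (t+1))]⟩} ∪
  {r | ∃ f : F, ∃ t : ℕ, t < n ∧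
      r = ⟨[.pos (.u f (t+1))], [.pos (.u f t)],
           [chi (FLit.pos f) (t+1), chi (FLit.neg f) (t+1)]⟩}

/-- Facts `occurs(e,i)` and `split(f,i)` encoding a qualified action sequence. -/
def occSplitFacts {F E : Type} {n : ℕ} (s : QSeq F E n) : Set (Rule (PAtom F E)) :=
  {r | ∃ i : Fin n, ∃ e ∈ s.acts i, r = fact (.pos (.occurs e (i : ℕ)))} ∪
  {r | ∃ i : Fin n, ∃ f ∈ s.quals i, r = fact (.pos (.split f (i : ℕ)))}

/-- The program `Φⁿ(σ₀, s)`: the translation of `AD` plus the facts encoding the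
initial state `σ₀` and the qualified action sequence `s`. -/
def PhiProg {F E : Type} (AD : ActionDesc F E) {n : ℕ}
    (σ0 : Set (ELit F)) (s : QSeq F E n) : Set (Rule (PAtom F E)) :=
  CoreProg AD n ∪
  {r | ∃ l : FLit F, l.toE ∈ σ0 ∧ r = fact (chi l 0)} ∪
  {r | ∃ f : F, ELit.und f ∈ σ0 ∧ r = fact (.pos (.u f 0))} ∪
  occSplitFacts s

/-- The initial-state axioms `[g₁]`,`[g₂]`,`[g₃]` of the paper. -/
def InitAxioms (F E : Type) : Set (Rule (PAtom F E)) :=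
  {r | ∃ f : F, r = ⟨[chi (FLit.pos f) 0], [.pos (.init f)], []⟩} ∪
  {r | ∃ f : F, r = ⟨[chi (FLit.neg f) 0], [.neg (.init f)], []⟩} ∪
  {r | ∃ f : F, r = ⟨[chi (FLit.pos f) 0], [.pos (.forced f), .pos (.dflt f)],
        [.neg (.init f)]⟩} ∪
  {r | ∃ f : F, r = ⟨[chi (FLit.pos f) 0, chi (FLit.neg f) 0], [.pos (.forced f)],
        [.pos (.dflt f), .pos (.init f), .neg (.init f)]⟩} ∪
  {r | ∃ f : F, r = ⟨[chi (FLit.neg f) 0], [.pos (.dflt f)], [chi (FLit.pos f) 0]⟩} ∪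
  {r | ∃ f : F, r = ⟨[.pos (.u f 0)], [],
        [.pos (.dflt f), chi (FLit.pos f) 0, chi (FLit.neg f) 0]⟩}

/-- The program `Π_AD(I,F,s)`. -/
def PiProg {F E : Type} (D : Set F) (AD : ActionDesc F E) {n : ℕ}
    (I : Set (ELit F)) (Fs : Set F) (s : QSeq F E n) : Set (Rule (PAtom F E)) :=
  CoreProg AD n ∪ InitAxioms F E ∪
  {r | ∃ f : F, ELit.pos f ∈ I ∧ r = fact (.pos (.init f))} ∪
  {r | ∃ f : F, ELit.neg f ∈ I ∧ r = fact (.neg (.init f))} ∪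
  {r | ∃ f ∈ Fs, r = fact (.pos (.forced f))} ∪
  {r | ∃ f ∈ D, r = fact (.pos (.dflt f))} ∪
  occSplitFacts s

/-- The state at step `i` decoded from an answer set `A`:
`{l | χ(l,i) ∈ A} ∪ {u(f) | u(f,i) ∈ A}`. -/
def decodeState {F E : Type} (A : Set (ALit (PAtom F E))) (i : ℕ) : Set (ELit F) :=
  {l | (∃ fl : FLit F, l = fl.toE ∧ chi fl i ∈ A) ∨
       (∃ f : F, l = ELit.und f ∧ ALit.pos (.u f i) ∈ A)}

/-- An answer set `A` encodes the path `π`. -/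
def Encodes {F E : Type} {n : ℕ} (A : Set (ALit (PAtom F E))) (π : Path F E n) : Prop :=
  (∀ l : FLit F, ∀ i : Fin (n+1), l.toE ∈ π.states i ↔ chi l (i : ℕ) ∈ A) ∧
  (∀ f : F, ∀ i : Fin (n+1), ELit.und f ∈ π.states i ↔ ALit.pos (.u f (i : ℕ)) ∈ A) ∧
  (∀ e : E, ∀ i : Fin n, e ∈ π.acts i ↔ ALit.pos (.occurs e (i : ℕ)) ∈ A)

/-! ### The FindMatch algorithm -/

/-- Step (1) of FindMatch: `R`, the intersection of all answer sets of
`Π_AD(I, 𝓕∖𝓓, ℵ^×)`. -/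
def FMR {F E : Type} (D : Set F) (AD : ActionDesc F E) {n : ℕ}
    (I : Set (ELit F)) (ℵ : Fin n → Set E) : Set (ALit (PAtom F E)) :=
  ⋂₀ {A | IsAnswerSet (PiProg D AD I (Set.univ \ D) (qall ℵ)) A}

/-- Step (1) of FindMatch: the set
`I' = I ∪ {l | {χ(l,0), forced(f)} ⊆ R, l = f or l = ¬f}`. -/
def FMI' {F E : Type} (D : Set F) (AD : ActionDesc F E) {n : ℕ}
    (I : Set (ELit F)) (ℵ : Fin n → Set E) : Set (ELit F) :=
  I ∪ {l | ∃ f : F,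
        ((l = ELit.pos f ∧ chi (FLit.pos f) 0 ∈ FMR D AD I ℵ) ∨
         (l = ELit.neg f ∧ chi (FLit.neg f) 0 ∈ FMR D AD I ℵ)) ∧
        ALit.pos (.forced f) ∈ FMR D AD I ℵ}

/-- The set `X` computed at step (4a) of FindMatch from an answer set `A` and `I'`. -/
def FMX {F E : Type} (I' : Set (ELit F)) (A : Set (ALit (PAtom F E))) : Set (ELit F) :=
  {l | ∃ f : F, ((l = ELit.pos f ∧ chi (FLit.pos f) 0 ∈ A) ∨
                 (l = ELit.neg f ∧ chi (FLit.neg f) 0 ∈ A)) ∧ l ∉ I'}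

/-- The pair `(Fs, s)` succeeds at steps (4)-(4c) of FindMatch with answer set `A`:
`A` is an answer set of `Π_AD(I',Fs,s)` containing `χ(q,k+1)` or `χ(¬q,k+1)`, and
every answer set `B` of `Π_AD(X,∅,⟨⟩)` passes the test of step (4b). -/
def PairSucceeds {F E : Type} (D : Set F) (AD : ActionDesc F E) {n : ℕ}
    (I' : Set (ELit F)) (q : F) (Fs : Set F) (s : QSeq F E n)
    (A : Set (ALit (PAtom F E))) : Prop :=
  IsAnswerSet (PiProg D AD I' Fs s) A ∧
  (chi (FLit.pos q) n ∈ A ∨ chi (FLit.neg q) n ∈ A) ∧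
  ∀ B : Set (ALit (PAtom F E)),
    IsAnswerSet (PiProg D AD (FMX I' A) (∅ : Set F) (emptyQ : QSeq F E 0)) B →
    ((chi (FLit.pos q) 0 ∉ B ∧ chi (FLit.neg q) 0 ∉ B) ∨
     (chi (FLit.pos q) 0 ∈ B ∧ chi (FLit.neg q) n ∈ A) ∨
     (chi (FLit.neg q) 0 ∈ B ∧ chi (FLit.pos q) n ∈ A))

/-- The possible return values of FindMatch(I,ℵ,q) other than `⊥`: an answer set `A`
of some pair `(Fs,s)` (with `s` extending `ℵ`) that succeeds, where `|Fs| + Δ(s)` is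
minimal among all succeeding pairs, and `Π_AD(I,𝓕∖𝓓,ℵ^×)` has an answer set. -/
def FMResults {F E : Type} (D : Set F) (AD : ActionDesc F E) {n : ℕ}
    (I : Set (ELit F)) (ℵ : Fin n → Set E) (q : F) :
    Set (Set (ALit (PAtom F E))) :=
  {A | (∃ S, IsAnswerSet (PiProg D AD I (Set.univ \ D) (qall ℵ)) S) ∧
    ∃ (Fs : Set F) (s : QSeq F E n), s.Extends ℵ ∧
      PairSucceeds D AD (FMI' D AD I ℵ) q Fs s A ∧
      ∀ (Fs' : Set F) (s' : QSeq F E n), s'.Extends ℵ →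
        (∃ A', PairSucceeds D AD (FMI' D AD I ℵ) q Fs' s' A') →
        Fs.ncard + s.degree ≤ Fs'.ncard + s'.degree}

open Classical in
/-- The FindMatch algorithm: returns an answer set encoding a path if a match
exists, `⊥` (here `none`) otherwise. -/
noncomputable def FindMatch {F E : Type} (D : Set F) (AD : ActionDesc F E) {n : ℕ}
    (I : Set (ELit F)) (ℵ : Fin n → Set E) (q : F) :
    Option (Set (ALit (PAtom F E))) :=
  if h : (FMResults D AD I ℵ q).Nonempty then some h.choose else none

/-- An atom is formed by the relations `forced` or `split`. -/
def isFS {F E : Type} : PAtom F E → Prop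
  | .forced _ => True
  | .split _ _ => True
  | _ => False

/-- `‖A‖`: the number of atoms of `A` formed by `forced` and `split`; `‖⊥‖ = ∞`. -/
noncomputable def normOpt {F E : Type} :
    Option (Set (ALit (PAtom F E))) → ℕ∞
  | none => ⊤
  | some A => (({x ∈ A | isFS x.atom}).ncard : ℕ∞)

end ACIR

/-!
Let `σ₁` be the state decoded from `A` at time 1. Reading the rules of `Φ¹` one at a time shows
that `σ₁` is consistent and closed under the state constraints, that inertia makes it complete,
that no executability condition fires in `σ₀`, and that every direct effect is realised in `σ₁`
(for `u(f)`: `σ₁` mentions `f`). Resolving each `u(f)` as `σ₁` does gives `W ∈ 𝔼(a₀,σ₀)` with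
`W ⊆ σ₁`, hence `Cn_Z(W ∪ (σ₁ ∩ σ₀)) ⊆ σ₁`. Conversely, by minimality every atom of `A` is
derived by some rule, and a literal at time 1 can only be derived from `W`, by inertia from
`σ₁ ∩ σ₀`, or by a state constraint; so `σ₁` lies in every set that contains `W ∪ (σ₁ ∩ σ₀)`
and is closed under the constraints.
-/

namespace ACIR

section Consequence

variable {F : Type} {Z : Set (StateConstraint F)} {S T : Set (ELit F)}

theorem subset_Cn : S ⊆ Cn Z S := fun _ hl _ hT => hT.1 hl

theorem closedUnderSC_Cn {c : StateConstraint F} (hc : c ∈ Z) : ClosedUnderSC c (Cn Z S) :=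
  fun hb T hT => hT.2 c hc fun l hl => hb l hl T hT

theorem Cn_subset (hST : S ⊆ T) (hT : ∀ c ∈ Z, ClosedUnderSC c T) : Cn Z S ⊆ T :=
  Set.sInter_subset_of_mem ⟨hST, hT⟩

end Consequence

section Literals

variable {F : Type} {S T : Set (ELit F)}

theorem ConsistentE.eq_of_fluent_eq (hS : ConsistentE S) {l l' : ELit F} (hl : l ∈ S)
    (hl' : l' ∈ S) (h : l.fluent = l'.fluent) : l = l' := by
  have := hS l.fluent
  cases l <;> cases l' <;> simp only [ELit.fluent] at h this <;> subst h <;> tauto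

theorem completeE_iff_forall_fOccurs : CompleteE S ↔ ∀ f, fOccurs f S := by
  refine forall_congr' fun f => ⟨?_, ?_⟩
  · rintro (h | h | h) <;> exact ⟨_, h, rfl⟩
  · rintro ⟨l | l | l, hl, rfl⟩ <;> simp [ELit.fluent, hl]

theorem eq_of_completeE_of_consistentE (hS : CompleteE S) (hT : ConsistentE T) (hST : S ⊆ T) :
    S = T := by
  refine hST.antisymm fun l hl => ?_
  obtain ⟨l', hl', hf⟩ := completeE_iff_forall_fOccurs.1 hS l.fluent
  rwa [hT.eq_of_fluent_eq hl (hST hl') hf.symm]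

open Classical in
noncomputable def fluentValue (S : Set (ELit F)) (f : F) : ELit F :=
  if ELit.pos f ∈ S then .pos f else if ELit.neg f ∈ S then .neg f else .und f

theorem fluentValue_eq_or (S : Set (ELit F)) (f : F) :
    fluentValue S f = .pos f ∨ fluentValue S f = .neg f ∨ fluentValue S f = .und f := by
  unfold fluentValue; split_ifs <;> simp

theorem fluentValue_fluent (hS : ConsistentE S) {l : ELit F} (hl : l ∈ S) :
    fluentValue S l.fluent = l := by
  have := hS l.fluent
  cases l <;> simp_all [fluentValue, ELit.fluent]

end Literals

section Expansion

variable {F E : Type} (AD : ActionDesc F E) (a : Set E) (σ : Set (ELit F)) {S : Set (ELit F)}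

/-- The member of `𝔼(a,σ)` that resolves each `u(f) ∈ E(a,σ)` as the set `S` does. -/
def choiceExpansion (S : Set (ELit F)) : Set (ELit F) :=
  {l ∈ directEff AD a σ | l.isLit} ∪ {l | ∃ f, ELit.und f ∈ directEff AD a σ ∧ l = fluentValue S f}

theorem choiceExpansion_mem_expansion : choiceExpansion AD a σ S ∈ expansion AD a σ :=
  ⟨fluentValue S, fun f _ => fluentValue_eq_or S f, rfl⟩

variable {AD a σ}

theorem mem_choiceExpansion_of_isLit {l : ELit F} (hl : l ∈ directEff AD a σ) (hlit : l.isLit) :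
    l ∈ choiceExpansion AD a σ S :=
  Or.inl ⟨hl, hlit⟩

theorem mem_choiceExpansion_of_und (hS : ConsistentE S) {l : ELit F}
    (hu : ELit.und l.fluent ∈ directEff AD a σ) (hl : l ∈ S) : l ∈ choiceExpansion AD a σ S :=
  Or.inr ⟨_, hu, (fluentValue_fluent hS hl).symm⟩

theorem choiceExpansion_subset (hS : ConsistentE S)
    (hlit : ∀ l : FLit F, l.toE ∈ directEff AD a σ → l.toE ∈ S)
    (hund : ∀ f, ELit.und f ∈ directEff AD a σ → fOccurs f S) :
    choiceExpansion AD a σ S ⊆ S := by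
  rintro l (⟨hl, hl_isLit⟩ | ⟨f, hf, rfl⟩)
  · cases l with
    | pos f => exact hlit (.pos f) hl
    | neg f => exact hlit (.neg f) hl
    | und f => exact hl_isLit.elim
  · obtain ⟨l, hl, rfl⟩ := hund f hf
    rwa [fluentValue_fluent hS hl]

end Expansion

namespace IsAnswerSet

variable {α : Type} {P : Set (Rule α)} {A : Set (ALit α)}

theorem exists_head_mem (hA : IsAnswerSet P A) {r : Rule α} (hr : r ∈ P)
    (hN : ∀ l ∈ r.bodyN, l ∉ A) (hP : ∀ l ∈ r.bodyP, l ∈ A) : ∃ x ∈ r.head, x ∈ A :=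
  hA.2.1 ⟨r.head, r.bodyP, []⟩ ⟨r, hr, hN, rfl⟩ ⟨hP, by simp⟩

theorem mem_of_rule (hA : IsAnswerSet P A) {x : ALit α} {bp bn : List (ALit α)}
    (hr : ⟨[x], bp, bn⟩ ∈ P) (hN : ∀ l ∈ bn, l ∉ A) (hP : ∀ l ∈ bp, l ∈ A) : x ∈ A := by
  simpa using hA.exists_head_mem hr hN hP

theorem mem_of_fact (hA : IsAnswerSet P A) {x : ALit α} (hr : fact x ∈ P) : x ∈ A :=
  hA.mem_of_rule hr (by simp) (by simp)

theorem not_body_subset (hA : IsAnswerSet P A) {bp bn : List (ALit α)} (hr : ⟨[], bp, bn⟩ ∈ P)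
    (hN : ∀ l ∈ bn, l ∉ A) : ¬ ∀ l ∈ bp, l ∈ A :=
  fun hP => by simpa using hA.exists_head_mem hr hN hP

/-- Minimality of answer sets, used as an induction principle over the rules. -/
theorem forall_of_supported (hA : IsAnswerSet P A) (p : ALit α → Prop)
    (h : ∀ r ∈ P, (∀ l ∈ r.bodyN, l ∉ A) → (∀ l ∈ r.bodyP, l ∈ A ∧ p l) →
      ∀ x ∈ r.head, x ∈ A → p x) :
    ∀ x ∈ A, p x := by
  obtain ⟨hcons, hclosed, hmin⟩ := hA
  have hT : {x ∈ A | p x} = A := by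
    refine hmin _ (fun a h => hcons a ⟨h.1.1, h.2.1⟩) ?_ fun x hx => hx.1
    rintro _ ⟨r, hr, hN, rfl⟩ ⟨hP, -⟩
    obtain ⟨x, hx, hxA⟩ :=
      hclosed ⟨r.head, r.bodyP, []⟩ ⟨r, hr, hN, rfl⟩ ⟨fun l hl => (hP l hl).1, by simp⟩
    exact ⟨x, hx, hxA, h r hr hN hP x hx hxA⟩
  intro x hx
  rw [← hT] at hx
  exact hx.2

end IsAnswerSet

section Encoding

variable {F E : Type}

/-- The ASP literal `χ(l,t)`, extended to `u(f,t)` for `l = u(f)`. -/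
def encode : ELit F → ℕ → ALit (PAtom F E)
  | .pos f, t => .pos (.holds f t)
  | .neg f, t => .neg (.holds f t)
  | .und f, t => .pos (.u f t)

theorem chi_eq_encode (l : FLit F) (t : ℕ) : (chi l t : ALit (PAtom F E)) = encode l.toE t := by
  cases l <;> rfl

variable {A : Set (ALit (PAtom F E))} {l : ELit F} {t : ℕ}

theorem mem_decodeState : l ∈ decodeState A t ↔ encode l t ∈ A := by
  constructor
  · rintro (⟨fl, rfl, h⟩ | ⟨f, rfl, h⟩)
    · rwa [← chi_eq_encode]
    · exact h
  · cases l with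
    | pos f => exact fun h => Or.inl ⟨.pos f, rfl, h⟩
    | neg f => exact fun h => Or.inl ⟨.neg f, rfl, h⟩
    | und f => exact fun h => Or.inr ⟨f, rfl, h⟩

theorem toE_mem_decodeState {l : FLit F} : l.toE ∈ decodeState A t ↔ chi l t ∈ A := by
  rw [mem_decodeState, chi_eq_encode]

theorem forall_chi_mem_iff (L : List (FLit F)) :
    (∀ x ∈ L.map (chi · t), x ∈ A) ↔ ∀ b ∈ L, b.toE ∈ decodeState A t := by
  simp [toE_mem_decodeState]

end Encoding

section Rules

variable {F E : Type} {AD : ActionDesc F E} {n : ℕ} {t : ℕ}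

theorem CoreProg_subset_PhiProg (σ0 : Set (ELit F)) (s : QSeq F E n) :
    CoreProg AD n ⊆ PhiProg AD σ0 s :=
  fun _ h => Or.inl (Or.inl (Or.inl h))

theorem dynLit_mem_CoreProg {d : DynamicLaw F E} (hd : d ∈ AD.dyn) (ht : t < n) {l : FLit F}
    (hl : d.eff = l.toE) :
    ⟨[chi l (t+1)], .pos (.occurs d.act t) :: d.cond.map (chi · t), []⟩ ∈ CoreProg AD n :=
  Or.inl (Or.inl (Or.inl (Or.inl (Or.inl (Or.inl (Or.inl (Or.inl
    (Or.inl ⟨d, hd, t, ht, l, hl, rfl⟩))))))))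

theorem dynUnknown_mem_CoreProg {d : DynamicLaw F E} (hd : d ∈ AD.dyn) (ht : t < n) {f : F}
    (hf : d.eff = .und f) :
    ⟨[.pos (.u f (t+1))], .pos (.occurs d.act t) :: d.cond.map (chi · t),
      [.pos (.split f t)]⟩ ∈ CoreProg AD n :=
  Or.inl (Or.inl (Or.inl (Or.inl (Or.inl (Or.inl (Or.inl (Or.inl
    (Or.inr ⟨d, hd, t, ht, f, hf, rfl⟩))))))))

theorem dynSplit_mem_CoreProg {d : DynamicLaw F E} (hd : d ∈ AD.dyn) (ht : t < n) {f : F}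
    (hf : d.eff = .und f) :
    ⟨[chi (.pos f) (t+1), chi (.neg f) (t+1)],
      .pos (.occurs d.act t) :: .pos (.split f t) :: d.cond.map (chi · t), []⟩ ∈
      CoreProg AD n :=
  Or.inl (Or.inl (Or.inl (Or.inl (Or.inl (Or.inl (Or.inl
    (Or.inr ⟨d, hd, t, ht, f, hf, rfl⟩)))))))

theorem sc_mem_CoreProg {c : StateConstraint F} (hc : c ∈ AD.sc) (ht : t ≤ n) :
    ⟨[chi c.head t], c.body.map (chi · t), []⟩ ∈ CoreProg AD n :=
  Or.inl (Or.inl (Or.inl (Or.inl (Or.inl (Or.inl (Or.inr ⟨c, hc, t, ht, rfl⟩))))))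

theorem exec_mem_CoreProg {ec : ExecCond F E} (hec : ec ∈ AD.exec) (ht : t < n) :
    ⟨[], .pos (.occurs ec.act t) :: ec.cond.map (chi · t), []⟩ ∈ CoreProg AD n :=
  Or.inl (Or.inl (Or.inl (Or.inl (Or.inl (Or.inr ⟨ec, hec, t, ht, rfl⟩)))))

theorem posUnknown_mem_CoreProg (f : F) (ht : t ≤ n) :
    ⟨[], [chi (.pos f) t, .pos (.u f t)], []⟩ ∈ CoreProg AD n :=
  Or.inl (Or.inl (Or.inl (Or.inl (Or.inr ⟨f, t, ht, rfl⟩))))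

theorem negUnknown_mem_CoreProg (f : F) (ht : t ≤ n) :
    ⟨[], [chi (.neg f) t, .pos (.u f t)], []⟩ ∈ CoreProg AD n :=
  Or.inl (Or.inl (Or.inl (Or.inr ⟨f, t, ht, rfl⟩)))

theorem inertiaPos_mem_CoreProg (f : F) (ht : t < n) :
    ⟨[chi (.pos f) (t+1)], [chi (.pos f) t], [chi (.neg f) (t+1), .pos (.u f (t+1))]⟩ ∈
      CoreProg AD n :=
  Or.inl (Or.inl (Or.inr ⟨f, t, ht, rfl⟩))

theorem inertiaNeg_mem_CoreProg (f : F) (ht : t < n) :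
    ⟨[chi (.neg f) (t+1)], [chi (.neg f) t], [chi (.pos f) (t+1), .pos (.u f (t+1))]⟩ ∈
      CoreProg AD n :=
  Or.inl (Or.inr ⟨f, t, ht, rfl⟩)

theorem inertiaUnknown_mem_CoreProg (f : F) (ht : t < n) :
    ⟨[.pos (.u f (t+1))], [.pos (.u f t)], [chi (.pos f) (t+1), chi (.neg f) (t+1)]⟩ ∈
      CoreProg AD n :=
  Or.inr ⟨f, t, ht, rfl⟩

variable (AD) {σ0 : Set (ELit F)} {s : QSeq F E n}

theorem chiFact_mem_PhiProg {l : FLit F} (hl : l.toE ∈ σ0) : fact (chi l 0) ∈ PhiProg AD σ0 s :=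
  Or.inl (Or.inl (Or.inr ⟨l, hl, rfl⟩))

theorem unknownFact_mem_PhiProg {f : F} (hf : ELit.und f ∈ σ0) :
    fact (.pos (.u f 0)) ∈ PhiProg AD σ0 s :=
  Or.inl (Or.inr ⟨f, hf, rfl⟩)

theorem occursFact_mem_PhiProg {i : Fin n} {e : E} (he : e ∈ s.acts i) :
    fact (.pos (.occurs e i)) ∈ PhiProg AD σ0 s :=
  Or.inr (Or.inl ⟨i, e, he, rfl⟩)

end Rules

section Decoding

variable {F E : Type} {AD : ActionDesc F E} {σ0 : Set (ELit F)} {n : ℕ} {s : QSeq F E n}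
  {A : Set (ALit (PAtom F E))}

theorem consistentE_decodeState (hA : IsAnswerSet (PhiProg AD σ0 s) A) {t : ℕ} (ht : t ≤ n) :
    ConsistentE (decodeState A t) := by
  intro f
  simp only [mem_decodeState, encode]
  refine ⟨hA.1 _, fun h => ?_, fun h => ?_⟩
  · exact hA.not_body_subset (CoreProg_subset_PhiProg σ0 s (posUnknown_mem_CoreProg f ht))
      (by simp) (by simpa [chi] using h)
  · exact hA.not_body_subset (CoreProg_subset_PhiProg σ0 s (negUnknown_mem_CoreProg f ht))
      (by simp) (by simpa [chi] using h)

theorem subset_decodeState_zero (hA : IsAnswerSet (PhiProg AD σ0 s) A) :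
    σ0 ⊆ decodeState A 0 := by
  intro l hl
  cases l with
  | pos f => exact toE_mem_decodeState.2 (hA.mem_of_fact (chiFact_mem_PhiProg AD (l := .pos f) hl))
  | neg f => exact toE_mem_decodeState.2 (hA.mem_of_fact (chiFact_mem_PhiProg AD (l := .neg f) hl))
  | und f => exact mem_decodeState.2 (hA.mem_of_fact (unknownFact_mem_PhiProg AD hl))

theorem decodeState_zero (hA : IsAnswerSet (PhiProg AD σ0 s) A) (hσ0 : CompleteE σ0) :
    decodeState A 0 = σ0 :=
  (eq_of_completeE_of_consistentE hσ0 (consistentE_decodeState hA n.zero_le)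
    (subset_decodeState_zero hA)).symm

theorem executable_decodeState (hA : IsAnswerSet (PhiProg AD σ0 s) A) (i : Fin n) :
    Executable AD (s.acts i) (decodeState A i) := by
  rintro ⟨ec, hec, hact, hcond⟩
  refine hA.not_body_subset (CoreProg_subset_PhiProg σ0 s (exec_mem_CoreProg hec i.isLt))
    (by simp) ?_
  exact List.forall_mem_cons.2
    ⟨hA.mem_of_fact (occursFact_mem_PhiProg AD hact), (forall_chi_mem_iff _).2 hcond⟩

theorem toE_mem_decodeState_succ (hA : IsAnswerSet (PhiProg AD σ0 s) A) (i : Fin n)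
    {l : FLit F} (hl : l.toE ∈ directEff AD (s.acts i) (decodeState A i)) :
    l.toE ∈ decodeState A (i + 1) := by
  obtain ⟨d, hd, hact, hcond, heff⟩ := hl
  refine toE_mem_decodeState.2 (hA.mem_of_rule
    (CoreProg_subset_PhiProg σ0 s (dynLit_mem_CoreProg hd i.isLt heff.symm)) (by simp) ?_)
  exact List.forall_mem_cons.2
    ⟨hA.mem_of_fact (occursFact_mem_PhiProg AD hact), (forall_chi_mem_iff _).2 hcond⟩

theorem fOccurs_decodeState_succ (hA : IsAnswerSet (PhiProg AD σ0 s) A) (i : Fin n) {f : F}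
    (hf : ELit.und f ∈ directEff AD (s.acts i) (decodeState A i)) :
    fOccurs f (decodeState A (i + 1)) := by
  obtain ⟨d, hd, hact, hcond, heff⟩ := hf
  have hocc := hA.mem_of_fact (occursFact_mem_PhiProg AD hact)
  have hbody := (forall_chi_mem_iff (A := A) d.cond).2 hcond
  by_cases hsplit : ALit.pos (.split f i) ∈ A
  · obtain ⟨x, hx, hxA⟩ := hA.exists_head_mem
      (CoreProg_subset_PhiProg σ0 s (dynSplit_mem_CoreProg hd i.isLt heff.symm)) (by simp)
      (by simp only [List.forall_mem_cons]; exact ⟨hocc, hsplit, hbody⟩)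
    simp only [List.mem_cons, List.not_mem_nil, or_false] at hx
    rcases hx with rfl | rfl
    · exact ⟨.pos f, toE_mem_decodeState (l := .pos f) |>.2 hxA, rfl⟩
    · exact ⟨.neg f, toE_mem_decodeState (l := .neg f) |>.2 hxA, rfl⟩
  · have hu := hA.mem_of_rule
      (CoreProg_subset_PhiProg σ0 s (dynUnknown_mem_CoreProg hd i.isLt heff.symm))
      (by simpa using hsplit) (List.forall_mem_cons.2 ⟨hocc, hbody⟩)
    exact ⟨.und f, mem_decodeState.2 hu, rfl⟩

theorem closedUnderSC_decodeState (hA : IsAnswerSet (PhiProg AD σ0 s) A) {t : ℕ} (ht : t ≤ n)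
    {c : StateConstraint F} (hc : c ∈ AD.sc) : ClosedUnderSC c (decodeState A t) :=
  fun hb => toE_mem_decodeState.2 (hA.mem_of_rule (CoreProg_subset_PhiProg σ0 s
    (sc_mem_CoreProg hc ht)) (by simp) ((forall_chi_mem_iff _).2 hb))

theorem completeE_decodeState_succ (hA : IsAnswerSet (PhiProg AD σ0 s) A) (i : Fin n)
    (h : CompleteE (decodeState A i)) : CompleteE (decodeState A (i + 1)) := by
  unfold CompleteE at h ⊢
  intro f
  simp only [mem_decodeState, encode] at h ⊢
  by_contra! hnone
  obtain ⟨hpos, hneg, hu⟩ := hnone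
  have core := fun {r} (hr : r ∈ CoreProg AD n) => CoreProg_subset_PhiProg σ0 s hr
  rcases h f with h0 | h0 | h0
  · exact hpos (hA.mem_of_rule (core (inertiaPos_mem_CoreProg f i.isLt))
      (by simp [chi, hneg, hu]) (by simpa [chi] using h0))
  · exact hneg (hA.mem_of_rule (core (inertiaNeg_mem_CoreProg f i.isLt))
      (by simp [chi, hpos, hu]) (by simpa [chi] using h0))
  · exact hu (hA.mem_of_rule (core (inertiaUnknown_mem_CoreProg f i.isLt))
      (by simp [chi, hpos, hneg]) (by simpa using h0))

end Decoding

section Minimality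

variable {F E : Type} {AD : ActionDesc F E} {σ0 : Set (ELit F)} {s : QSeq F E 1}
  {A : Set (ALit (PAtom F E))} {a : Set E} {C : Set (ELit F)}

/-- The invariant of the minimality argument for `Φ¹`: occurrences are of elementary actions of
`a`, and literals at time 1 encode members of `C`. -/
def Supported (a : Set E) (C : Set (ELit F)) : ALit (PAtom F E) → Prop
  | .pos (.occurs e _) => e ∈ a
  | .pos (.holds f 1) => ELit.pos f ∈ C
  | .neg (.holds f 1) => ELit.neg f ∈ C
  | .pos (.u f 1) => ELit.und f ∈ C
  | _ => True

theorem supported_encode_zero (l : ELit F) : Supported a C (encode l 0 : ALit (PAtom F E)) := by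
  cases l <;> trivial

theorem supported_encode_one {l : ELit F} :
    Supported a C (encode l 1 : ALit (PAtom F E)) ↔ l ∈ C := by
  cases l <;> rfl

theorem eff_mem_directEff {d : DynamicLaw F E} (hd : d ∈ AD.dyn)
    (hocc : Supported a C (.pos (.occurs d.act 0)))
    (hcond : ∀ x ∈ d.cond.map (chi · 0), x ∈ A ∧ Supported a C x) :
    d.eff ∈ directEff AD a (decodeState A 0) :=
  ⟨d, hd, hocc, (forall_chi_mem_iff _).1 fun x hx => (hcond x hx).1, rfl⟩

theorem supported_of_dynamicLaw (hcons : ConsistentE (decodeState A 1))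
    (hW : choiceExpansion AD a (decodeState A 0) (decodeState A 1) ⊆ C)
    {d : DynamicLaw F E} (hd : d ∈ AD.dyn) (hocc : Supported a C (.pos (.occurs d.act 0)))
    (hcond : ∀ x ∈ d.cond.map (chi · 0), x ∈ A ∧ Supported a C x)
    {l : ELit F} (heff : d.eff = l ∨ d.eff = .und l.fluent) (hl : encode l 1 ∈ A) :
    Supported a C (encode l 1) := by
  have hdir := eff_mem_directEff hd hocc hcond
  have of_und (hu : ELit.und l.fluent ∈ directEff AD a (decodeState A 0)) :
      Supported a C (encode l 1) :=
    supported_encode_one.2 (hW (mem_choiceExpansion_of_und hcons hu (mem_decodeState.2 hl)))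
  rcases heff with heff | heff
  · rw [heff] at hdir
    cases l with
    | und f => exact of_und hdir
    | pos f => exact supported_encode_one.2 (hW (mem_choiceExpansion_of_isLit hdir trivial))
    | neg f => exact supported_encode_one.2 (hW (mem_choiceExpansion_of_isLit hdir trivial))
  · exact of_und (heff ▸ hdir)

theorem supported_of_inertia (hinert : decodeState A 1 ∩ decodeState A 0 ⊆ C) {l : ELit F}
    (h0 : encode l 0 ∈ A) (h1 : encode l 1 ∈ A) :
    Supported a C (encode l 1) :=
  supported_encode_one.2 (hinert ⟨mem_decodeState.2 h1, mem_decodeState.2 h0⟩)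

theorem supported_head_of_mem_CoreProg (hcons : ConsistentE (decodeState A 1))
    (hsc : ∀ c ∈ AD.sc, ClosedUnderSC c C)
    (hW : choiceExpansion AD a (decodeState A 0) (decodeState A 1) ⊆ C)
    (hinert : decodeState A 1 ∩ decodeState A 0 ⊆ C) {r : Rule (PAtom F E)} (hr : r ∈ CoreProg AD 1)
    (hP : ∀ l ∈ r.bodyP, l ∈ A ∧ Supported a C l) :
    ∀ x ∈ r.head, x ∈ A → Supported a C x := by
  rcases hr with (((((((((h | h) | h) | h) | h) | h) | h) | h) | h) | h)
  · obtain ⟨d, hd, t, ht, l, hl, rfl⟩ := h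
    obtain rfl : t = 0 := Nat.lt_one_iff.1 ht
    simp only [List.forall_mem_cons, List.mem_singleton, forall_eq] at hP ⊢
    exact fun hx => chi_eq_encode l 1 ▸
      supported_of_dynamicLaw hcons hW hd hP.1.2 hP.2 (.inl hl) (chi_eq_encode l 1 ▸ hx)
  · obtain ⟨d, hd, t, ht, f, hf, rfl⟩ := h
    obtain rfl : t = 0 := Nat.lt_one_iff.1 ht
    simp only [List.forall_mem_cons, List.mem_singleton, forall_eq] at hP ⊢
    exact supported_of_dynamicLaw (l := .und f) hcons hW hd hP.1.2 hP.2 (.inl hf)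
  · obtain ⟨d, hd, t, ht, f, hf, rfl⟩ := h
    obtain rfl : t = 0 := Nat.lt_one_iff.1 ht
    simp only [List.forall_mem_cons] at hP
    simp only [List.mem_cons, List.not_mem_nil, or_false, forall_eq_or_imp, forall_eq]
    exact ⟨supported_of_dynamicLaw (l := .pos f) hcons hW hd hP.1.2 hP.2.2 (.inr hf),
      supported_of_dynamicLaw (l := .neg f) hcons hW hd hP.1.2 hP.2.2 (.inr hf)⟩
  · obtain ⟨c, hc, t, ht, rfl⟩ := h
    simp only [List.mem_singleton, forall_eq, chi_eq_encode]
    rcases Nat.le_one_iff_eq_zero_or_eq_one.1 ht with rfl | rfl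
    · exact fun _ => supported_encode_zero _
    refine fun _ => supported_encode_one.2 (hsc c hc fun b hb => ?_)
    simpa [chi_eq_encode, supported_encode_one] using (hP _ (List.mem_map_of_mem hb)).2
  · obtain ⟨_, _, _, _, rfl⟩ := h; simp
  · obtain ⟨_, _, _, rfl⟩ := h; simp
  · obtain ⟨_, _, _, rfl⟩ := h; simp
  all_goals
    obtain ⟨f, t, ht, rfl⟩ := h
    obtain rfl : t = 0 := Nat.lt_one_iff.1 ht
    simp only [List.mem_singleton, forall_eq] at hP ⊢
  · exact supported_of_inertia (l := .pos f) hinert hP.1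
  · exact supported_of_inertia (l := .neg f) hinert hP.1
  · exact supported_of_inertia (l := .und f) hinert hP.1

theorem decodeState_one_subset (hA : IsAnswerSet (PhiProg AD σ0 s) A)
    (hsc : ∀ c ∈ AD.sc, ClosedUnderSC c C)
    (hW : choiceExpansion AD (s.acts 0) (decodeState A 0) (decodeState A 1) ⊆ C)
    (hinert : decodeState A 1 ∩ decodeState A 0 ⊆ C) :
    decodeState A 1 ⊆ C := by
  suffices h : ∀ x ∈ A, Supported (s.acts 0) C x from
    fun l hl => supported_encode_one.1 (h _ (mem_decodeState.1 hl))
  refine hA.forall_of_supported _ fun r hr _ hP => ?_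
  rcases hr with ((hr | ⟨l, -, rfl⟩) | ⟨f, -, rfl⟩) | ⟨i, e, he, rfl⟩ | ⟨i, f, -, rfl⟩
  · exact supported_head_of_mem_CoreProg (consistentE_decodeState hA le_rfl) hsc hW hinert hr hP
  all_goals simp only [fact, List.mem_singleton, forall_eq]
  · exact fun _ => chi_eq_encode l 0 ▸ supported_encode_zero l.toE
  · exact fun _ => supported_encode_zero (.und f)
  · exact fun _ => Fin.fin_one_eq_zero i ▸ he
  · exact fun _ => trivial

end Minimality

theorem isTransition_decodeState_one {F E : Type} {AD : ActionDesc F E} {σ0 : Set (ELit F)}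
    (hσ0 : IsState AD σ0) {s : QSeq F E 1} {A : Set (ALit (PAtom F E))}
    (hA : IsAnswerSet (PhiProg AD σ0 s) A) :
    IsTransition AD σ0 (s.acts 0) (decodeState A 1) := by
  have h0 : decodeState A 0 = σ0 := decodeState_zero hA hσ0.1
  have hcons : ConsistentE (decodeState A 1) := consistentE_decodeState hA le_rfl
  have hsc : ∀ c ∈ AD.sc, ClosedUnderSC c (decodeState A 1) :=
    fun _ => closedUnderSC_decodeState hA le_rfl
  have hW : choiceExpansion AD (s.acts 0) (decodeState A 0) (decodeState A 1) ⊆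
      decodeState A 1 :=
    choiceExpansion_subset hcons (fun _ => toE_mem_decodeState_succ hA 0)
      (fun _ => fOccurs_decodeState_succ hA 0)
  rw [← h0] at hσ0 ⊢
  refine ⟨hσ0, ⟨completeE_decodeState_succ hA 0 hσ0.1, hcons, hsc⟩,
    executable_decodeState hA 0, _, choiceExpansion_mem_expansion AD _ _ (S := decodeState A 1),
    ?_⟩
  rw [Set.inter_comm]
  refine (decodeState_one_subset hA (fun _ => closedUnderSC_Cn) ?_ ?_).antisymm
    (Cn_subset (Set.union_subset hW Set.inter_subset_left) hsc)
  · exact fun _ hl => subset_Cn (Or.inl hl)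
  · exact fun _ hl => subset_Cn (Or.inr hl)

theorem stmt6_general {F E : Type} (AD : ActionDesc F E)
    (σ0 : Set (ELit F)) (hσ0 : IsState AD σ0) (a0 : Set E) (q0 : Set F)
    (A : Set (ALit (PAtom F E)))
    (hA : IsAnswerSet (PhiProg AD σ0 (⟨fun _ => a0, fun _ => q0⟩ : QSeq F E 1)) A) :
    IsTransition AD σ0 a0 (decodeState A 1) ∧
    CompleteE (decodeState A 1 : Set (ELit F)) ∧
    ConsistentE (decodeState A 1 : Set (ELit F)) ∧
    Executable AD a0 σ0 ∧
    ∃ W ∈ expansion AD a0 σ0,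
      (decodeState A 1 : Set (ELit F)) =
        Cn AD.sc (W ∪ ((decodeState A 1 : Set (ELit F)) ∩ σ0)) := by
  have htr := isTransition_decodeState_one hσ0 hA
  refine ⟨htr, ?_⟩
  obtain ⟨-, ⟨hcomp, hcons, -⟩, hexec, W, hW, heq⟩ := htr
  exact ⟨hcomp, hcons, hexec, W, hW, by rwa [Set.inter_comm] at heq⟩

/-- For every answer set `A` of `Φ¹(σ₀,a₀,q₀)`, letting
`σ₁ = {l | χ(l,1) ∈ A} ∪ {u(f) | u(f,1) ∈ A}`, the triple `⟨σ₀,a₀,σ₁⟩` is a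
transition of `τ(AD)`; in particular `σ₁` is complete and consistent, `a₀` is
executable in `σ₀`, and `σ₁ = Cn_Z(W ∪ (σ₁ ∩ σ₀))` for some `W ∈ 𝔼(a₀,σ₀)`. -/
theorem stmt6 {F E : Type} [Fintype F] (AD : ActionDesc F E)
    (σ0 : Set (ELit F)) (hσ0 : IsState AD σ0) (a0 : Set E) (q0 : Set F)
    (A : Set (ALit (PAtom F E)))
    (hA : IsAnswerSet (PhiProg AD σ0 (⟨fun _ => a0, fun _ => q0⟩ : QSeq F E 1)) A) :
    IsTransition AD σ0 a0 (decodeState A 1) ∧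
    CompleteE (decodeState A 1 : Set (ELit F)) ∧
    ConsistentE (decodeState A 1 : Set (ELit F)) ∧
    Executable AD a0 σ0 ∧
    ∃ W ∈ expansion AD a0 σ0,
      (decodeState A 1 : Set (ELit F)) =
        Cn AD.sc (W ∪ ((decodeState A 1 : Set (ELit F)) ∩ σ0)) :=
  stmt6_general AD σ0 hσ0 a0 q0 A hA

end ACIR
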